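/- For every n ∈ S and every u ∈ ℝ, the variance of the third-order chaotic projection of the excursion area satisfies the exact identity Var((γ₃(u)/3!)·∫_𝕋 H₃(f_n(x)) dx) = (γ₃(u)²/3!)·|S₃(n)|/N_n³, where γ₃(u) := H₂(u)·φ(u) = (u² − 1)·φ(u) and H₃(t) = t³ − 3t is the third probabilists' Hermite polynomial. In particular this variance is at most C/N_n² for an absolute constant C > 0. -/

import Mathlib

open MeasureTheory ProbabilityTheory Real

noncomputable section

/-- A point of the plane `ℝ²` (with the Euclidean metric); the torus `𝕋 = ℝ²/ℤ²` is
realized through the fundamental domain `[0,1)²`. -/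
abbrev Pt := EuclideanSpace ℝ (Fin 2)

/-- The set `Λ_n` of lattice points on the circle of radius `√n`. -/
def Lam (n : ℕ) : Finset (ℤ × ℤ) :=
  (Finset.Icc (-(n : ℤ), -(n : ℤ)) ((n : ℤ), (n : ℤ))).filter
    fun l => l.1 ^ 2 + l.2 ^ 2 = (n : ℤ)

/-- The half frequency set `Λ_n⁺`: points with positive second coordinate, together with
`(√n, 0)` when `n` is a perfect square. -/
def LamPlus (n : ℕ) : Finset (ℤ × ℤ) :=
  (Lam n).filter fun l => 0 < l.2 ∨ (l.2 = 0 ∧ 0 < l.1)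

/-- The spectral multiplicity `N_n = |Λ_n|`. -/
def Nn (n : ℕ) : ℕ := (Lam n).card

/-- The energy level `E_n = 4π²n`. -/
def En (n : ℕ) : ℝ := 4 * Real.pi ^ 2 * n

/-- The character `x ↦ e^{2πi⟨λ,x⟩}`. -/
def eChar (l : ℤ × ℤ) (x : Pt) : ℂ :=
  Complex.exp (2 * Real.pi * Complex.I * ((l.1 : ℂ) * (x 0 : ℝ) + (l.2 : ℂ) * (x 1 : ℝ)))

/-- The complex-valued random wave `N_n^{-1/2} ∑_{λ ∈ Λ_n} a_λ e^{2πi⟨λ,x⟩}`. -/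
def Fwave (n : ℕ) {Ω : Type*} (a : ℤ × ℤ → Ω → ℂ) (ω : Ω) (x : Pt) : ℂ :=
  ((Real.sqrt (Nn n) : ℂ))⁻¹ * ∑ l ∈ Lam n, a l ω * eChar l x

/-- The arithmetic random wave `f_n` (the real part of the complex wave; under the
hermitian symmetry `a_{-λ} = conj a_λ` the wave is real-valued). -/
def fwave (n : ℕ) {Ω : Type*} (a : ℤ × ℤ → Ω → ℂ) (ω : Ω) (x : Pt) : ℝ :=
  (Fwave n a ω x).re

/-- Fundamental domain `[0,1)²` of the torus `𝕋 = ℝ²/ℤ²`. -/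
def box : Set Pt := {x | x 0 ∈ Set.Ico (0 : ℝ) 1 ∧ x 1 ∈ Set.Ico (0 : ℝ) 1}

/-- The excursion area `L₂(u) = vol{x ∈ 𝕋 : f(x) ≥ u}`. -/
def excArea (f : Pt → ℝ) (u : ℝ) : ℝ :=
  (volume {x ∈ box | u ≤ f x}).toReal

/-- Half the length (1-dim Hausdorff measure) of the level set `{f = u}` of the torus:
the Lipschitz–Killing curvature `L₁(u)`. -/
def levelLen (f : Pt → ℝ) (u : ℝ) : ℝ :=
  (μH[1] {x ∈ box | f x = u}).toReal / 2

/-- Standard Gaussian cumulative distribution function `Φ`. -/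
def Phi (u : ℝ) : ℝ := ((gaussianReal 0 1) (Set.Iic u)).toReal

/-- Standard Gaussian density `φ`. -/
def phi (u : ℝ) : ℝ := (Real.sqrt (2 * Real.pi))⁻¹ * Real.exp (-u ^ 2 / 2)

/-- The hypotheses on the random coefficients `(a_λ)` of an arithmetic random wave:
measurability; hermitian symmetry `a_{-λ} = conj a_λ`; real and imaginary parts are
centered Gaussians of variance `1/2`, independent of each other; and the coefficients
indexed by `Λ_n⁺` are mutually independent. -/
def ARW (n : ℕ) {Ω : Type*} [MeasureSpace Ω] (a : ℤ × ℤ → Ω → ℂ) : Prop :=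
  (∀ l, Measurable (a l)) ∧
  (∀ l ∈ Lam n, ∀ ω, a (-l) ω = (starRingEnd ℂ) (a l ω)) ∧
  (∀ l ∈ Lam n, Measure.map (fun ω => (a l ω).re) volume = gaussianReal 0 (1 / 2)) ∧
  (∀ l ∈ Lam n, Measure.map (fun ω => (a l ω).im) volume = gaussianReal 0 (1 / 2)) ∧
  (∀ l ∈ Lam n, IndepFun (fun ω => (a l ω).re) (fun ω => (a l ω).im) volume) ∧
  iIndepFun
    (fun (l : LamPlus n) ω => a l.1 ω) volume

/-- The membership `n ∈ S`: `n` is a sum of two squares. -/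
def memS (n : ℕ) : Prop := ∃ p q : ℤ, (n : ℤ) = p ^ 2 + q ^ 2

end

open MeasureTheory ProbabilityTheory

noncomputable section

/-- The `q`-th probabilists' Hermite polynomial, evaluated at a real number. -/
def Hq (q : ℕ) (t : ℝ) : ℝ := Polynomial.aeval t (Polynomial.hermite q)

/-- The length-3 spectral correlation set
`S₃(n) = {(λ, λ', λ'') ∈ Λ_n³ : λ + λ' + λ'' = 0}`. -/
def S3 (n : ℕ) : Finset ((ℤ × ℤ) × (ℤ × ℤ) × (ℤ × ℤ)) :=
  ((Lam n) ×ˢ (Lam n) ×ˢ (Lam n)).filter fun t => t.1 + t.2.1 + t.2.2 = 0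

end

/-!
If three vectors of `Λ_n` (`n ≠ 0`) summed to zero, they would have equal lengths and pairwise
angles of `2π/3`, so `√3 = 2|det(λ, λ')| / n` would be rational; hence `S₃(n) = ∅`. Since `f_n`
is real, `H₃(f_n) = f_n³ - 3 f_n` is a trigonometric polynomial whose frequencies are sums of one
or three elements of `Λ_n`, none of them zero, so `∫_𝕋 H₃(f_n) = 0` for every sample: both sides
of the variance identity vanish. The case `n = 0` is excluded by the hypotheses on the
coefficients, since `a_0 = conj a_0` cannot have a Gaussian imaginary part.
-/

section Torus

def Pt.equivProd : Pt ≃ᵐ ℝ × ℝ :=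
  (MeasurableEquiv.toLp 2 (Fin 2 → ℝ)).symm.trans MeasurableEquiv.finTwoArrow

lemma Pt.equivProd_apply (x : Pt) : Pt.equivProd x = (x 0, x 1) := rfl

lemma Pt.measurePreserving_equivProd : MeasurePreserving Pt.equivProd volume volume :=
  (volume_preserving_finTwoArrow ℝ).comp
    (EuclideanSpace.volume_preserving_symm_measurableEquiv_toLp (Fin 2))

lemma box_eq_preimage : box = Pt.equivProd ⁻¹' (Set.Ico (0 : ℝ) 1 ×ˢ Set.Ico (0 : ℝ) 1) := by
  ext x
  simp [box, Pt.equivProd_apply]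

lemma volume_box : volume box = 1 := by
  rw [box_eq_preimage, Pt.measurePreserving_equivProd.measure_preimage
    (measurableSet_Ico.prod measurableSet_Ico).nullMeasurableSet,
    Measure.volume_eq_prod, Measure.prod_prod, Real.volume_Ico]
  simp

lemma setIntegral_box_mul (f g : ℝ → ℂ) :
    ∫ x in box, f (x 0) * g (x 1) =
      (∫ t in Set.Ico (0 : ℝ) 1, f t) * ∫ t in Set.Ico (0 : ℝ) 1, g t := by
  rw [box_eq_preimage]
  refine (Pt.measurePreserving_equivProd.setIntegral_preimage_emb
    Pt.equivProd.measurableEmbedding (fun p : ℝ × ℝ => f p.1 * g p.2) _).trans ?_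
  rw [Measure.volume_eq_prod]
  exact setIntegral_prod_mul f g _ _

lemma setIntegral_Ico_exp_two_pi_I_int_mul {k : ℤ} (hk : k ≠ 0) :
    ∫ t in Set.Ico (0 : ℝ) 1, Complex.exp (2 * π * Complex.I * k * t) = 0 := by
  have hc : 2 * π * Complex.I * k ≠ 0 := by simp [Real.pi_ne_zero, hk]
  have h_one : Complex.exp (2 * π * Complex.I * k * (1 : ℝ)) = 1 := by
    rw [← Complex.exp_int_mul_two_pi_mul_I k]
    push_cast
    ring_nf
  rw [Measure.restrict_congr_set Ico_ae_eq_Ioc, ← intervalIntegral.integral_of_le zero_le_one,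
    integral_exp_mul_complex hc, h_one]
  simp

end Torus

section Characters

lemma eChar_eq_mul (l : ℤ × ℤ) (x : Pt) :
    eChar l x = Complex.exp (2 * π * Complex.I * l.1 * (x 0 : ℝ)) *
      Complex.exp (2 * π * Complex.I * l.2 * (x 1 : ℝ)) := by
  rw [eChar, ← Complex.exp_add]
  ring_nf

lemma norm_eChar (l : ℤ × ℤ) (x : Pt) : ‖eChar l x‖ = 1 := by
  rw [eChar, ← Complex.norm_exp_ofReal_mul_I (2 * π * (l.1 * x 0 + l.2 * x 1))]
  push_cast
  ring_nf

lemma measurable_eChar (l : ℤ × ℤ) : Measurable (eChar l) := by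
  unfold eChar
  fun_prop

lemma eChar_mul_eChar (l m : ℤ × ℤ) (x : Pt) : eChar l x * eChar m x = eChar (l + m) x := by
  rw [eChar, eChar, eChar, ← Complex.exp_add]
  push_cast [Prod.fst_add, Prod.snd_add]
  ring_nf

lemma conj_eChar (l : ℤ × ℤ) (x : Pt) : (starRingEnd ℂ) (eChar l x) = eChar (-l) x := by
  rw [eChar, eChar, ← Complex.exp_conj]
  simp only [map_mul, map_add, Complex.conj_I, Complex.conj_ofReal, map_intCast, map_ofNat,
    Prod.fst_neg, Prod.snd_neg, Int.cast_neg]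
  ring_nf

lemma setIntegral_box_eChar {l : ℤ × ℤ} (hl : l ≠ 0) : ∫ x in box, eChar l x = 0 := by
  simp_rw [eChar_eq_mul]
  rw [setIntegral_box_mul (fun t => Complex.exp (2 * π * Complex.I * l.1 * t))
    (fun t => Complex.exp (2 * π * Complex.I * l.2 * t))]
  by_cases h₁ : l.1 = 0
  · have h₂ : l.2 ≠ 0 := fun h₂ => hl (Prod.ext h₁ h₂)
    rw [setIntegral_Ico_exp_two_pi_I_int_mul h₂, mul_zero]
  · rw [setIntegral_Ico_exp_two_pi_I_int_mul h₁, zero_mul]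

variable {ι : Type*} (c : ι → ℂ) (k : ι → ℤ × ℤ)

lemma integrableOn_box_sum_eChar (s : Finset ι) :
    IntegrableOn (fun x => ∑ i ∈ s, c i * eChar (k i) x) box := by
  refine integrable_finsetSum _ fun i _ => Integrable.mono' (g := fun _ => ‖c i‖)
    (integrableOn_const (by simp [volume_box]))
    ((measurable_eChar (k i)).const_mul (c i)).aestronglyMeasurable
    (.of_forall fun x => ?_)
  rw [norm_mul, norm_eChar, mul_one]

lemma setIntegral_box_sum_eChar {s : Finset ι} (hk : ∀ i ∈ s, k i ≠ 0) :
    ∫ x in box, ∑ i ∈ s, c i * eChar (k i) x = 0 := by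
  rw [integral_finsetSum s fun i _ => (integrableOn_box_sum_eChar c k {i}).congr
    (.of_forall fun x => by simp)]
  exact Finset.sum_eq_zero fun i hi => by
    rw [integral_const_mul, setIntegral_box_eChar (hk i hi), mul_zero]

lemma sum_eChar_pow_three (s : Finset (ℤ × ℤ)) (c : ℤ × ℤ → ℂ) (x : Pt) :
    (∑ l ∈ s, c l * eChar l x) ^ 3 =
      ∑ t ∈ s ×ˢ s ×ˢ s, c t.1 * c t.2.1 * c t.2.2 * eChar (t.1 + t.2.1 + t.2.2) x := by
  simp_rw [pow_three, Finset.sum_mul_sum, Finset.mul_sum, Finset.sum_product,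
    ← eChar_mul_eChar]
  refine Finset.sum_congr rfl fun _ _ => Finset.sum_congr rfl fun _ _ =>
    Finset.sum_congr rfl fun _ _ => by ring

end Characters

section Lattice

lemma mem_Lam {n : ℕ} {l : ℤ × ℤ} : l ∈ Lam n ↔ l.1 ^ 2 + l.2 ^ 2 = n := by
  refine ⟨fun h => (Finset.mem_filter.mp h).2, fun h => Finset.mem_filter.mpr ⟨?_, h⟩⟩
  rw [Finset.mem_Icc]
  refine ⟨⟨?_, ?_⟩, ?_, ?_⟩ <;> nlinarith [Int.le_self_sq l.1, Int.le_self_sq (-l.1),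
    Int.le_self_sq l.2, Int.le_self_sq (-l.2), sq_nonneg l.1, sq_nonneg l.2]

lemma neg_mem_Lam {n : ℕ} {l : ℤ × ℤ} (h : l ∈ Lam n) : -l ∈ Lam n := by
  rw [mem_Lam] at h ⊢
  simpa using h

lemma Int.eq_zero_of_sq_eq_three_mul_sq {m e : ℤ} (h : m ^ 2 = 3 * e ^ 2) : e = 0 := by
  by_contra he
  have h3 : IsSquare (3 : ℚ) := ⟨m / e, by field_simp; exact_mod_cast h.symm⟩
  norm_num at h3

lemma S3_eq_empty {n : ℕ} (hn : n ≠ 0) : S3 n = ∅ := by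
  refine Finset.filter_eq_empty_iff.mpr ?_
  rintro ⟨⟨a, b⟩, ⟨c, d⟩, ⟨p, q⟩⟩ ht hsum
  simp only [Finset.mem_product, mem_Lam] at ht
  obtain ⟨h₁, h₂, h₃⟩ := ht
  obtain ⟨rfl, rfl⟩ : p = -(a + c) ∧ q = -(b + d) := by
    simp only [Prod.mk_add_mk, Prod.mk_eq_zero] at hsum
    omega
  -- equal lengths summing to zero force `2⟨λ, λ'⟩ = -n`, hence `(2 det(λ, λ'))² = 3n²`
  have h_inner : 2 * (a * c + b * d) = -(n : ℤ) := by linear_combination h₃ - h₁ - h₂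
  have h_det : (2 * (a * d - b * c)) ^ 2 = 3 * (n : ℤ) ^ 2 := by
    linear_combination (4 * (c ^ 2 + d ^ 2)) * h₁ + 4 * (n : ℤ) * h₂ +
      ((n : ℤ) - 2 * (a * c + b * d)) * h_inner
  exact hn (by exact_mod_cast Int.eq_zero_of_sq_eq_three_mul_sq h_det)

end Lattice

lemma Polynomial.hermite_three : hermite 3 = X ^ 3 - 3 * X := by
  have h_two : hermite 2 = X ^ 2 - 1 := by
    rw [hermite_succ, hermite_one, derivative_X]
    ring
  rw [hermite_succ, h_two]
  simp only [derivative_sub, derivative_one, derivative_X_pow, C_eq_natCast]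
  push_cast
  ring

lemma Hq_three (t : ℝ) : Hq 3 t = t ^ 3 - 3 * t := by
  rw [Hq, Polynomial.hermite_three]
  simp only [map_sub, map_pow, map_mul, Polynomial.aeval_X, map_ofNat]

section Wave

variable {Ω : Type*} {n : ℕ} {a : ℤ × ℤ → Ω → ℂ}

lemma Fwave_eq_sum (ω : Ω) (x : Pt) :
    Fwave n a ω x = ∑ l ∈ Lam n, ((√(Nn n) : ℂ)⁻¹ * a l ω) * eChar l x := by
  simp_rw [Fwave, Finset.mul_sum, mul_assoc]

lemma conj_Fwave (hherm : ∀ l ∈ Lam n, ∀ ω, a (-l) ω = (starRingEnd ℂ) (a l ω))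
    (ω : Ω) (x : Pt) : (starRingEnd ℂ) (Fwave n a ω x) = Fwave n a ω x := by
  rw [Fwave, map_mul, map_inv₀, Complex.conj_ofReal, map_sum]
  congr 1
  refine Finset.sum_equiv (Equiv.neg (ℤ × ℤ)) (fun l => ?_) (fun l hl => ?_)
  · exact ⟨neg_mem_Lam, fun h => by simpa using neg_mem_Lam h⟩
  · rw [map_mul, conj_eChar, ← hherm l hl ω, Equiv.neg_apply]

lemma ofReal_fwave (hherm : ∀ l ∈ Lam n, ∀ ω, a (-l) ω = (starRingEnd ℂ) (a l ω))
    (ω : Ω) (x : Pt) : (fwave n a ω x : ℂ) = Fwave n a ω x :=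
  Complex.conj_eq_iff_re.mp (conj_Fwave hherm ω x)

lemma setIntegral_box_Hq_three_fwave (hS3 : S3 n = ∅)
    (hherm : ∀ l ∈ Lam n, ∀ ω, a (-l) ω = (starRingEnd ℂ) (a l ω)) (ω : Ω) :
    ∫ x in box, Hq 3 (fwave n a ω x) = 0 := by
  set c : ℤ × ℤ → ℂ := fun l => (√(Nn n) : ℂ)⁻¹ * a l ω
  have h_triple : ∀ t ∈ Lam n ×ˢ Lam n ×ˢ Lam n, t.1 + t.2.1 + t.2.2 ≠ 0 :=
    Finset.filter_eq_empty_iff.mp hS3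
  have h_single : ∀ l ∈ Lam n, l ≠ 0 := by
    rintro l hl rfl
    exact h_triple (0, 0, 0) (by simp [hl]) (by simp)
  have h_pt : ∀ x, (Hq 3 (fwave n a ω x) : ℂ) =
      (∑ t ∈ Lam n ×ˢ Lam n ×ˢ Lam n, c t.1 * c t.2.1 * c t.2.2 * eChar (t.1 + t.2.1 + t.2.2) x)
        - ∑ l ∈ Lam n, 3 * c l * eChar l x := by
    intro x
    rw [Hq_three, ← sum_eChar_pow_three, Finset.sum_congr rfl fun l _ => mul_assoc 3 (c l) _,
      ← Finset.mul_sum]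
    push_cast
    rw [ofReal_fwave hherm, Fwave_eq_sum]
  apply Complex.ofReal_injective
  rw [← integral_complex_ofReal, integral_congr_ae (.of_forall h_pt),
    integral_sub (integrableOn_box_sum_eChar _ _ _) (integrableOn_box_sum_eChar _ _ _),
    setIntegral_box_sum_eChar _ _ h_triple, setIntegral_box_sum_eChar _ _ h_single]
  simp

end Wave

lemma not_ARW_zero {Ω : Type*} [MeasureSpace Ω] [IsProbabilityMeasure (volume : Measure Ω)]
    (a : ℤ × ℤ → Ω → ℂ) : ¬ ARW 0 a := by
  rintro ⟨-, hherm, -, him, -⟩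
  have h_zero : (0 : ℤ × ℤ) ∈ Lam 0 := mem_Lam.mpr (by simp)
  have h_real : (fun ω => (a 0 ω).im) = fun _ => 0 := funext fun ω =>
    Complex.conj_eq_iff_im.mp (by simpa using (hherm 0 h_zero ω).symm)
  have h_law := him 0 h_zero
  rw [h_real, Measure.map_const, measure_univ, one_smul] at h_law
  have := nullSingletonClass_gaussianReal (μ := 0) (v := 1 / 2) (by norm_num)
  have h_atom := measure_singleton (μ := gaussianReal 0 (1 / 2)) (0 : ℝ)
  rw [← h_law, Measure.dirac_apply_of_mem (Set.mem_singleton 0)] at h_atom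
  exact one_ne_zero h_atom

/-- For every `n ∈ S` and `u ∈ ℝ`,
`Var((γ₃(u)/3!)·∫_𝕋 H₃(f_n)) = (γ₃(u)²/3!)·|S₃(n)|/N_n³` where `γ₃(u) = H₂(u)φ(u)`,
and this variance is at most `C/N_n²` for an absolute constant `C > 0`. -/
theorem arw_third_chaos_variance :
    ∃ C : ℝ, 0 < C ∧
      ∀ (Ω : Type) [MeasureSpace Ω] [IsProbabilityMeasure (volume : Measure Ω)],
        ∀ (n : ℕ), memS n → ∀ (a : ℤ × ℤ → Ω → ℂ), ARW n a → ∀ u : ℝ,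
          variance (fun ω =>
              Hq 2 u * phi u / 6 * ∫ x in box, Hq 3 (fwave n a ω x)) volume
            = (Hq 2 u * phi u) ^ 2 / 6 * ((S3 n).card : ℝ) / (Nn n : ℝ) ^ 3 ∧
          variance (fun ω =>
              Hq 2 u * phi u / 6 * ∫ x in box, Hq 3 (fwave n a ω x)) volume
            ≤ C / (Nn n : ℝ) ^ 2 := by
  refine ⟨1, one_pos, fun Ω _ _ n _ a ha u => ?_⟩
  have hn : n ≠ 0 := by
    rintro rfl
    exact not_ARW_zero a ha
  have h_chaos : (fun ω => Hq 2 u * phi u / 6 * ∫ x in box, Hq 3 (fwave n a ω x)) = 0 :=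
    funext fun ω => by
      rw [setIntegral_box_Hq_three_fwave (S3_eq_empty hn) ha.2.1, mul_zero, Pi.zero_apply]
  rw [h_chaos, variance_zero, S3_eq_empty hn]
  constructor
  · simp
  · positivity
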